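/- Let α > −2, let N ≥ 3 be an integer, and let (u, v) be an entire radial solution of Δ²u = |x|^α e^u normalized by u(0) = 0, with β = v(0). Then for every r > 0 one has e^{u(r)} ≤ −β (2+α)(N+α) r^{−(2+α)}. -/

import Mathlib

/-!
Let `P = r^{N-1} u'` and `G = r^{N-1} v'` be the radial fluxes, so that `P' = r^{N-1} v`,
`G' = r^{N-1+α} e^u` and `P(0) = G(0) = 0`. Then `G ≥ 0`, so `v` is nondecreasing.

The heart of the matter is that `v ≤ 0`. Otherwise `v ≥ c > 0` from some point on, `u'` grows
linearly, and on a unit interval `[ρ₀, ρ₀ + 1]` far out two integrations of the fluxes give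
`u(ρ + d) ≥ u(ρ) + e^{u(ρ)} d⁴ / C`; iterating this over the dyadic points
`ρ₀ + 1 - 2^{-k}` makes `u` unbounded on that compact interval.

Hence `P ≤ 0`, so `u` is nonincreasing, and integrating `G' ≥ r^{N-1+α} e^{u(r)}` twice
from `0` gives `v(r) - v(0) ≥ e^{u(r)} r^{2+α} / ((N+α)(2+α))`; together with `v(r) ≤ 0` this
is the estimate.
-/

open MeasureTheory Real Set Filter

noncomputable section

/-- An entire radial solution of `Δ²u = |x|^α e^u` in dimension `N`, normalized by
`u(0) = 0`: a pair of `C²` functions `u, v` on `[0,∞)` with `u(0) = 0`,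
`u′(0) = v′(0) = 0` (one-sided derivatives at `0`), satisfying for all `r > 0`
`u″(r) + (N-1)u′(r)/r = v(r)` and `v″(r) + (N-1)v′(r)/r = r^α e^{u(r)}`. -/
def IsEntireRadialSolution (N : ℕ) (α : ℝ) (u v : ℝ → ℝ) : Prop :=
  ContDiffOn ℝ 2 u (Set.Ici 0) ∧ ContDiffOn ℝ 2 v (Set.Ici 0) ∧
  u 0 = 0 ∧ derivWithin u (Set.Ici 0) 0 = 0 ∧ derivWithin v (Set.Ici 0) 0 = 0 ∧
  (∀ r > (0 : ℝ), deriv (deriv u) r + ((N : ℝ) - 1) * deriv u r / r = v r) ∧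
  (∀ r > (0 : ℝ), deriv (deriv v) r + ((N : ℝ) - 1) * deriv v r / r = r ^ α * Real.exp (u r))

/-- The set of initial data `β = v(0)` for which an entire radial solution exists. -/
def entireSet (N : ℕ) (α : ℝ) : Set ℝ :=
  {β : ℝ | ∃ u v : ℝ → ℝ, IsEntireRadialSolution N α u v ∧ v 0 = β}

open scoped Topology

theorem sub_le_sub_of_hasDerivAt_le {f g f' g' : ℝ → ℝ} {a b : ℝ} (hab : a ≤ b)
    (hf : ContinuousOn f (Icc a b)) (hg : ContinuousOn g (Icc a b))
    (hf' : ∀ x ∈ Ioo a b, HasDerivAt f (f' x) x)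
    (hg' : ∀ x ∈ Ioo a b, HasDerivAt g (g' x) x) (hle : ∀ x ∈ Ioo a b, f' x ≤ g' x) :
    f b - f a ≤ g b - g a := by
  have hmono : MonotoneOn (fun x => g x - f x) (Icc a b) := by
    refine monotoneOn_of_hasDerivWithinAt_nonneg (f' := fun x => g' x - f' x) (convex_Icc a b)
      (hg.sub hf) (fun x hx => ?_) (fun x hx => ?_) <;> rw [interior_Icc] at hx
    · exact ((hg' x hx).sub (hf' x hx)).hasDerivWithinAt
    · exact sub_nonneg.2 (hle x hx)
  have := hmono (left_mem_Icc.2 hab) (right_mem_Icc.2 hab) hab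
  linarith

theorem monotoneOn_Ici_of_hasDerivAt_nonneg {f f' : ℝ → ℝ} {a : ℝ}
    (hf : ContinuousOn f (Ici a))
    (hf' : ∀ x, a < x → HasDerivAt f (f' x) x) (hle : ∀ x, a < x → 0 ≤ f' x) :
    MonotoneOn f (Ici a) :=
  monotoneOn_of_hasDerivWithinAt_nonneg (convex_Ici a) hf
    (fun x hx => (hf' x (by simpa using hx)).hasDerivWithinAt)
    (fun x hx => hle x (by simpa using hx))

theorem antitoneOn_Ici_of_hasDerivAt_nonpos {f f' : ℝ → ℝ} {a : ℝ}
    (hf : ContinuousOn f (Ici a))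
    (hf' : ∀ x, a < x → HasDerivAt f (f' x) x) (hle : ∀ x, a < x → f' x ≤ 0) :
    AntitoneOn f (Ici a) :=
  antitoneOn_of_hasDerivWithinAt_nonpos (convex_Ici a) hf
    (fun x hx => (hf' x (by simpa using hx)).hasDerivWithinAt)
    (fun x hx => hle x (by simpa using hx))

theorem sixteen_pow_le_exp_three_mul (k : ℕ) : (16 : ℝ) ^ k ≤ exp (3 * k) := by
  have h16 : (16 : ℝ) ≤ exp 3 := by
    have he : (2.7 : ℝ) ^ 3 ≤ exp 1 ^ 3 :=
      pow_le_pow_left₀ (by norm_num) (by linarith [exp_one_gt_d9]) 3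
    rw [← exp_nat_mul] at he
    norm_num at he
    linarith
  rw [mul_comm, exp_nat_mul]
  exact pow_le_pow_left₀ (by norm_num) h16 k

theorem not_bddAbove_of_exp_increment {f : ℝ → ℝ} {a C : ℝ} (hC : 0 < C)
    (hinc : ∀ ρ d, a ≤ ρ → 0 ≤ d → ρ + d ≤ a + 1 →
      f ρ + exp (f ρ) * d ^ 4 / C ≤ f (ρ + d))
    (ha : 48 * C ≤ exp (f a)) : ¬ BddAbove (f '' Icc a (a + 1)) := by
  rintro ⟨M, hM⟩
  set ρ : ℕ → ℝ := fun k => a + 1 - (1 / 2) ^ k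
  have hρ_mem (k : ℕ) : ρ k ∈ Icc a (a + 1) := by
    have h₀ : (0 : ℝ) ≤ (1 / 2) ^ k := by positivity
    have h₁ : (1 / 2 : ℝ) ^ k ≤ 1 := pow_le_one₀ (by norm_num) (by norm_num)
    constructor <;> linarith
  have hρ_succ (k : ℕ) : ρ (k + 1) = ρ k + (1 / 2) ^ (k + 1) := by
    simp only [ρ, pow_succ]; ring
  have hgrowth (k : ℕ) : f a + 3 * k ≤ f (ρ k) := by
    induction k with
    | zero => simp [ρ]
    | succ k ih =>
      have hstep := hinc (ρ k) ((1 / 2) ^ (k + 1)) (hρ_mem k).1 (by positivity)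
        (hρ_succ k ▸ (hρ_mem (k + 1)).2)
      rw [← hρ_succ] at hstep
      have hexp : 48 * C * exp (3 * k) ≤ exp (f (ρ k)) := by
        calc 48 * C * exp (3 * k) ≤ exp (f a) * exp (3 * k) := by gcongr
          _ = exp (f a + 3 * k) := (exp_add _ _).symm
          _ ≤ exp (f (ρ k)) := exp_le_exp.2 ih
      have h3 : 3 ≤ exp (f (ρ k)) * ((1 / 2) ^ (k + 1)) ^ 4 / C := by
        rw [le_div_iff₀ hC]
        calc 3 * C = 48 * C * 16 ^ k * ((1 / 2) ^ (k + 1)) ^ 4 := by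
              rw [← pow_mul, show (16 : ℝ) = 2 ^ 4 by norm_num, ← pow_mul, one_div, inv_pow]
              field_simp
              ring
          _ ≤ 48 * C * exp (3 * k) * ((1 / 2) ^ (k + 1)) ^ 4 := by
              gcongr; exact sixteen_pow_le_exp_three_mul k
          _ ≤ exp (f (ρ k)) * ((1 / 2) ^ (k + 1)) ^ 4 := by gcongr
      push_cast
      linarith
  obtain ⟨k, hk⟩ := exists_nat_gt ((M - f a) / 3)
  have := hM ⟨ρ k, hρ_mem k, rfl⟩
  linarith [hgrowth k, (div_lt_iff₀ (by norm_num : (0:ℝ) < 3)).1 hk]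

/-- `r^{N-1} w'(r)`, with the one-sided derivative so that it is continuous up to `r = 0`. -/
def radialFlux (N : ℕ) (w : ℝ → ℝ) (r : ℝ) : ℝ :=
  r ^ (N - 1) * derivWithin w (Ici 0) r

section RadialFlux

variable {N : ℕ} {w : ℝ → ℝ} {r : ℝ}

theorem radialFlux_zero (hw : derivWithin w (Ici 0) 0 = 0) : radialFlux N w 0 = 0 := by
  simp [radialFlux, hw]

theorem radialFlux_of_pos (hr : 0 < r) : radialFlux N w r = r ^ (N - 1) * deriv w r := by
  rw [radialFlux, derivWithin_of_mem_nhds (Ici_mem_nhds hr)]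

theorem ContDiffOn.continuousOn_radialFlux (hw : ContDiffOn ℝ 1 w (Ici 0)) :
    ContinuousOn (radialFlux N w) (Ici 0) :=
  (continuous_pow _).continuousOn.mul (hw.continuousOn_derivWithin (uniqueDiffOn_Ici 0) le_rfl)

theorem ContDiffOn.hasDerivAt_of_pos (hw : ContDiffOn ℝ 1 w (Ici 0)) (hr : 0 < r) :
    HasDerivAt w (deriv w r) r :=
  ((hw.differentiableOn one_ne_zero r hr.le).differentiableAt (Ici_mem_nhds hr)).hasDerivAt

theorem ContDiffOn.hasDerivAt_radialFlux (hN : 1 ≤ N) (hw : ContDiffOn ℝ 2 w (Ici 0))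
    (hr : 0 < r) {g : ℝ} (hode : deriv (deriv w) r + ((N : ℝ) - 1) * deriv w r / r = g) :
    HasDerivAt (radialFlux N w) (r ^ (N - 1) * g) r := by
  have hw' : ContDiffOn ℝ 1 (deriv w) (Ioi 0) :=
    (hw.mono Ioi_subset_Ici_self).deriv_of_isOpen isOpen_Ioi (by norm_num)
  have hw'' : HasDerivAt (deriv w) (deriv (deriv w) r) r :=
    ((hw'.differentiableOn one_ne_zero r hr).differentiableAt (Ioi_mem_nhds hr)).hasDerivAt
  have hflux : (fun s => s ^ (N - 1) * deriv w s) =ᶠ[𝓝 r] radialFlux N w :=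
    eventually_of_mem (Ioi_mem_nhds hr) fun s hs => (radialFlux_of_pos hs).symm
  refine (((hasDerivAt_pow (N - 1) r).mul hw'').congr_of_eventuallyEq hflux.symm).congr_deriv ?_
  obtain ⟨n, rfl⟩ : ∃ n, N = n + 1 := ⟨N - 1, by omega⟩
  rw [← hode]
  cases n with
  | zero => simp
  | succ n => simp only [Nat.add_sub_cancel, pow_succ]; push_cast; field_simp; ring

theorem ContDiffOn.add_mul_sq_le_of_radialFlux {F' : ℝ → ℝ} {ρ d k B : ℝ}
    (hw : ContDiffOn ℝ 1 w (Ici 0)) (hρ : 0 < ρ) (hd : 0 ≤ d) (hk : 0 ≤ k)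
    (hF : ∀ x ∈ Ioo ρ (ρ + d), HasDerivAt (radialFlux N w) (F' x) x)
    (hkF : ∀ x ∈ Ioo ρ (ρ + d), k ≤ F' x) (hF0 : 0 ≤ radialFlux N w ρ)
    (hB : (ρ + d) ^ (N - 1) ≤ B) :
    w ρ + k * d ^ 2 / (2 * B) ≤ w (ρ + d) := by
  have hIcc : Icc ρ (ρ + d) ⊆ Ici 0 := fun x hx => hρ.le.trans hx.1
  have hB0 : 0 < B := (pow_pos (by linarith) _).trans_le hB
  have hflux_ge : ∀ x ∈ Icc ρ (ρ + d), k * (x - ρ) ≤ radialFlux N w x := by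
    intro x hx
    have := sub_le_sub_of_hasDerivAt_le (f := fun s => k * s) (f' := fun _ => k) hx.1
      (by fun_prop) (hw.continuousOn_radialFlux.mono ((Icc_subset_Icc_right hx.2).trans hIcc))
      (fun s _ => by simpa using (hasDerivAt_id s).const_mul k)
      (fun s hs => hF s ⟨hs.1, hs.2.trans_le hx.2⟩)
      (fun s hs => hkF s ⟨hs.1, hs.2.trans_le hx.2⟩)
    linarith
  have hderiv_ge : ∀ x ∈ Ioo ρ (ρ + d), k * (x - ρ) / B ≤ deriv w x := by
    intro x hx
    have hx0 : 0 < x := hρ.trans hx.1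
    have hpow : 0 < x ^ (N - 1) := pow_pos hx0 _
    calc k * (x - ρ) / B ≤ k * (x - ρ) / x ^ (N - 1) :=
          div_le_div_of_nonneg_left (mul_nonneg hk (by linarith [hx.1])) hpow
            ((pow_le_pow_left₀ hx0.le hx.2.le _).trans hB)
      _ ≤ radialFlux N w x / x ^ (N - 1) := by gcongr; exact hflux_ge x (Ioo_subset_Icc_self hx)
      _ = deriv w x := by rw [radialFlux_of_pos hx0]; field_simp
  have := sub_le_sub_of_hasDerivAt_le (f := fun s => k * (s - ρ) ^ 2 / (2 * B))
    (f' := fun s => k * (s - ρ) / B) (by linarith) (by fun_prop) (hw.continuousOn.mono hIcc)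
    (fun s _ => ((((hasDerivAt_id s).sub_const ρ).pow 2).const_mul k |>.div_const (2 * B))
      |>.congr_deriv (by simp only [id_eq]; field_simp; ring))
    (fun s hs => hw.hasDerivAt_of_pos (hρ.trans hs.1)) hderiv_ge
  simp only [sub_self, add_sub_cancel_left] at this
  norm_num at this
  linarith

end RadialFlux

namespace IsEntireRadialSolution

variable {N : ℕ} {α : ℝ} {u v : ℝ → ℝ}

theorem contDiffOn_u (h : IsEntireRadialSolution N α u v) : ContDiffOn ℝ 2 u (Ici 0) := h.1

theorem contDiffOn_v (h : IsEntireRadialSolution N α u v) : ContDiffOn ℝ 2 v (Ici 0) := h.2.1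

theorem hasDerivAt_u (h : IsEntireRadialSolution N α u v) {r : ℝ} (hr : 0 < r) :
    HasDerivAt u (deriv u r) r :=
  (h.contDiffOn_u.of_le one_le_two).hasDerivAt_of_pos hr

theorem hasDerivAt_v (h : IsEntireRadialSolution N α u v) {r : ℝ} (hr : 0 < r) :
    HasDerivAt v (deriv v r) r :=
  (h.contDiffOn_v.of_le one_le_two).hasDerivAt_of_pos hr

theorem radialFlux_u_zero (h : IsEntireRadialSolution N α u v) : radialFlux N u 0 = 0 :=
  radialFlux_zero h.2.2.2.1

theorem radialFlux_v_zero (h : IsEntireRadialSolution N α u v) : radialFlux N v 0 = 0 :=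
  radialFlux_zero h.2.2.2.2.1

theorem continuousOn_radialFlux_u (h : IsEntireRadialSolution N α u v) :
    ContinuousOn (radialFlux N u) (Ici 0) :=
  (h.contDiffOn_u.of_le one_le_two).continuousOn_radialFlux

theorem continuousOn_radialFlux_v (h : IsEntireRadialSolution N α u v) :
    ContinuousOn (radialFlux N v) (Ici 0) :=
  (h.contDiffOn_v.of_le one_le_two).continuousOn_radialFlux

theorem hasDerivAt_radialFlux_u (h : IsEntireRadialSolution N α u v) (hN : 1 ≤ N) {r : ℝ}
    (hr : 0 < r) : HasDerivAt (radialFlux N u) (r ^ (N - 1) * v r) r :=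
  h.contDiffOn_u.hasDerivAt_radialFlux hN hr (h.2.2.2.2.2.1 r hr)

theorem hasDerivAt_radialFlux_v (h : IsEntireRadialSolution N α u v) (hN : 1 ≤ N) {r : ℝ}
    (hr : 0 < r) : HasDerivAt (radialFlux N v) (r ^ (N - 1) * (r ^ α * exp (u r))) r :=
  h.contDiffOn_v.hasDerivAt_radialFlux hN hr (h.2.2.2.2.2.2 r hr)

theorem radialFlux_v_nonneg (h : IsEntireRadialSolution N α u v) (hN : 1 ≤ N) {r : ℝ}
    (hr : 0 ≤ r) : 0 ≤ radialFlux N v r := by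
  have hmono := monotoneOn_Ici_of_hasDerivAt_nonneg h.continuousOn_radialFlux_v
    (fun x hx => h.hasDerivAt_radialFlux_v hN hx) (fun x hx => by positivity)
  simpa [h.radialFlux_v_zero] using hmono self_mem_Ici hr hr

theorem deriv_v_nonneg (h : IsEntireRadialSolution N α u v) (hN : 1 ≤ N) {r : ℝ}
    (hr : 0 < r) : 0 ≤ deriv v r := by
  have := h.radialFlux_v_nonneg hN hr.le
  rw [radialFlux_of_pos hr] at this
  exact nonneg_of_mul_nonneg_right (by linarith) (pow_pos hr _)

theorem monotoneOn_v (h : IsEntireRadialSolution N α u v) (hN : 1 ≤ N) : MonotoneOn v (Ici 0) :=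
  monotoneOn_Ici_of_hasDerivAt_nonneg h.contDiffOn_v.continuousOn
    (fun _ hx => h.hasDerivAt_v hx) (fun _ hx => h.deriv_v_nonneg hN hx)

theorem deriv_u_ge_of_le_v (h : IsEntireRadialSolution N α u v) (hN : 1 ≤ N) {s c : ℝ}
    (hs : 1 ≤ s) (hcv : ∀ x, s ≤ x → c ≤ v x) :
    ∃ M, ∀ r, s ≤ r → c * r / N - M ≤ deriv u r := by
  set M := max 0 (c * s ^ N / N - radialFlux N u s)
  refine ⟨M, fun r hr => ?_⟩
  have hr0 : 0 < r := by linarith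
  have hN0 : (N : ℝ) ≠ 0 := by positivity
  have hflux : c * r ^ N / N - c * s ^ N / N ≤ radialFlux N u r - radialFlux N u s :=
    sub_le_sub_of_hasDerivAt_le (f' := fun x => c * x ^ (N - 1)) hr (by fun_prop)
      (h.continuousOn_radialFlux_u.mono fun x hx => (zero_le_one.trans hs).trans hx.1)
      (fun x _ => ((hasDerivAt_pow N x).const_mul c |>.div_const (N : ℝ)).congr_deriv
        (by field_simp))
      (fun x hx => h.hasDerivAt_radialFlux_u hN (by linarith [hx.1]))
      (fun x hx => by
        rw [mul_comm]
        exact mul_le_mul_of_nonneg_left (hcv x hx.1.le) (pow_nonneg (by linarith [hx.1]) _))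
  have hpow : 1 ≤ r ^ (N - 1) := one_le_pow₀ (by linarith)
  have hM : c * r ^ N / N - M ≤ r ^ (N - 1) * deriv u r := by
    rw [← radialFlux_of_pos hr0]
    linarith [le_max_right 0 (c * s ^ N / N - radialFlux N u s)]
  have hrN : r ^ N = r ^ (N - 1) * r := by rw [← pow_succ, Nat.sub_add_cancel hN]
  calc c * r / N - M ≤ c * r / N - M / r ^ (N - 1) := by
        gcongr; exact div_le_self (le_max_left _ _) hpow
    _ = (c * r ^ N / N - M) / r ^ (N - 1) := by rw [hrN]; field_simp
    _ ≤ deriv u r := by rw [div_le_iff₀ (by positivity)]; linarith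

theorem exists_deriv_u_ge_of_le_v (h : IsEntireRadialSolution N α u v) (hN : 1 ≤ N) {s c : ℝ}
    (hs : 1 ≤ s) (hc : 0 < c) (hcv : ∀ x, s ≤ x → c ≤ v x) (b : ℝ) :
    ∃ R, s ≤ R ∧ ∀ r, R ≤ r → b ≤ deriv u r := by
  obtain ⟨M, hM⟩ := h.deriv_u_ge_of_le_v hN hs hcv
  refine ⟨max s (N * (b + M) / c), le_max_left _ _, fun r hr => ?_⟩
  have hN0 : (0 : ℝ) < N := by positivity
  have hbr : b + M ≤ c * r / N := by
    rw [le_div_iff₀ hN0]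
    have := (div_le_iff₀ hc).1 ((le_max_right _ _).trans hr)
    linarith
  linarith [hM r ((le_max_left _ _).trans hr)]

theorem exists_large_start_of_v_pos (h : IsEntireRadialSolution N α u v) (hN : 1 ≤ N) {s : ℝ}
    (hs : 0 ≤ s) (hv : 0 < v s) :
    ∃ ρ, 1 ≤ ρ ∧ 0 ≤ v ρ ∧ (∀ x, ρ ≤ x → 0 ≤ deriv u x) ∧
      48 * (64 * ((ρ + 1) ^ (N - 1)) ^ 2) ≤ exp (u ρ) := by
  set n := 2 * (N - 1)
  have hcv : ∀ x, max s 1 ≤ x → v s ≤ v x := fun x hx =>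
    h.monotoneOn_v hN hs (hs.trans ((le_max_left _ _).trans hx)) ((le_max_left _ _).trans hx)
  obtain ⟨R, hsR, hR⟩ := h.exists_deriv_u_ge_of_le_v hN (le_max_right _ _) hv hcv (n + 1)
  have hR1 : 1 ≤ R := (le_max_right _ _).trans hsR
  have hlin : ∀ x, R ≤ x → u R + (n + 1) * (x - R) ≤ u x := by
    intro x hx
    have := sub_le_sub_of_hasDerivAt_le (f := fun y => (n + 1) * y) (f' := fun _ => n + 1) hx
      (by fun_prop)
      (h.contDiffOn_u.continuousOn.mono fun y hy => (zero_le_one.trans hR1).trans hy.1)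
      (fun y _ => by simpa using (hasDerivAt_id y).const_mul ((n : ℝ) + 1))
      (fun y hy => h.hasDerivAt_u (by linarith [hy.1]))
      (fun y hy => hR y hy.1.le)
    linarith
  set ρ := max R (log (48 * 64) - u R + (n + 1) * R)
  have hRρ : R ≤ ρ := le_max_left _ _
  refine ⟨ρ, hR1.trans hRρ, (hv.trans_le (hcv ρ (hsR.trans hRρ))).le,
    fun x hx => (by linarith : (0 : ℝ) ≤ n + 1).trans (hR x (hRρ.trans hx)), ?_⟩
  have hu : log (48 * 64) + n * ρ ≤ u ρ := by
    linarith [hlin ρ hRρ, le_max_right R (log (48 * 64) - u R + (n + 1) * R)]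
  calc 48 * (64 * ((ρ + 1) ^ (N - 1)) ^ 2) = 48 * 64 * (ρ + 1) ^ n := by ring
    _ ≤ 48 * 64 * exp ρ ^ n := by gcongr; linarith [add_one_le_exp ρ]
    _ = exp (log (48 * 64) + n * ρ) := by rw [exp_add, exp_log (by norm_num), exp_nat_mul]
    _ ≤ exp (u ρ) := exp_le_exp.2 hu

theorem exp_increment_le (h : IsEntireRadialSolution N α u v) (hN : 1 ≤ N)
    (hNα : 0 ≤ (N : ℝ) - 1 + α) {ρ₀ : ℝ} (hρ₀ : 1 ≤ ρ₀) (hv : 0 ≤ v ρ₀)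
    (hu : ∀ x, ρ₀ ≤ x → 0 ≤ deriv u x) {ρ d : ℝ} (hρ : ρ₀ ≤ ρ) (hd : 0 ≤ d)
    (hρd : ρ + d ≤ ρ₀ + 1) :
    u ρ + exp (u ρ) * d ^ 4 / (64 * ((ρ₀ + 1) ^ (N - 1)) ^ 2) ≤ u (ρ + d) := by
  set B := (ρ₀ + 1) ^ (N - 1)
  have hB : 0 < B := by positivity
  have hρ0 : 0 < ρ := by linarith
  have hu_mono : MonotoneOn u (Ici ρ₀) :=
    monotoneOn_Ici_of_hasDerivAt_nonneg
      (h.contDiffOn_u.continuousOn.mono (Ici_subset_Ici.2 (by linarith)))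
      (fun x hx => h.hasDerivAt_u (by linarith)) fun x hx => hu x hx.le
  have hv_le : ∀ {x y}, ρ₀ ≤ x → x ≤ y → v x ≤ v y := fun hx hxy =>
    h.monotoneOn_v hN (by linarith : (0 : ℝ) ≤ _) (by linarith : (0 : ℝ) ≤ _) hxy
  have hpow_le : ∀ {x}, x ≤ ρ₀ + 1 → 0 ≤ x → x ^ (N - 1) ≤ B := fun hx hx0 =>
    pow_le_pow_left₀ hx0 hx _
  have hv_half : v ρ + exp (u ρ) * (d / 2) ^ 2 / (2 * B) ≤ v (ρ + d / 2) := by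
    refine (h.contDiffOn_v.of_le one_le_two).add_mul_sq_le_of_radialFlux hρ0 (by linarith)
      (exp_pos _).le
      (fun x hx => h.hasDerivAt_radialFlux_v hN (hρ0.trans hx.1)) (fun x hx => ?_)
      (h.radialFlux_v_nonneg hN hρ0.le) (hpow_le (by linarith) (by linarith))
    have hx1 : 1 ≤ x := by linarith [hx.1]
    have hx0 : 0 < x := by linarith
    have hxα : 1 ≤ x ^ (N - 1) * x ^ α := by
      rw [← rpow_natCast, ← rpow_add hx0]
      exact one_le_rpow hx1 (by push_cast [Nat.cast_sub hN]; linarith)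
    have hux : exp (u ρ) ≤ exp (u x) :=
      exp_le_exp.2 (hu_mono hρ (by linarith [hx.1] : ρ₀ ≤ x) hx.1.le)
    calc exp (u ρ) ≤ 1 * exp (u x) := by linarith
      _ ≤ x ^ (N - 1) * x ^ α * exp (u x) := by gcongr
      _ = x ^ (N - 1) * (x ^ α * exp (u x)) := by ring
  have hu_half :
      u (ρ + d / 2) + v (ρ + d / 2) * (d / 2) ^ 2 / (2 * B) ≤ u (ρ + d / 2 + d / 2) := by
    have hρ' : ρ₀ ≤ ρ + d / 2 := by linarith
    refine (h.contDiffOn_u.of_le one_le_two).add_mul_sq_le_of_radialFlux (by linarith) (by linarith)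
      (hv.trans (hv_le le_rfl hρ')) (fun x hx => h.hasDerivAt_radialFlux_u hN (by linarith [hx.1]))
      (fun x hx => ?_) ?_ (hpow_le (by linarith) (by linarith))
    · have hx1 : 1 ≤ x ^ (N - 1) := one_le_pow₀ (by linarith [hx.1])
      have hvx : v (ρ + d / 2) ≤ v x := hv_le hρ' hx.1.le
      have hvx0 : 0 ≤ v x := hv.trans (hv_le le_rfl (by linarith [hx.1]))
      nlinarith
    · rw [radialFlux_of_pos (by linarith)]
      exact mul_nonneg (pow_nonneg (by linarith) _) (hu _ hρ')
  have hu_mid : u ρ ≤ u (ρ + d / 2) := hu_mono hρ (by simp; linarith) (by linarith)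
  have hv_mid : exp (u ρ) * d ^ 2 / (8 * B) ≤ v (ρ + d / 2) := by
    have : exp (u ρ) * (d / 2) ^ 2 / (2 * B) = exp (u ρ) * d ^ 2 / (8 * B) := by
      field_simp; ring
    linarith [hv.trans (hv_le le_rfl hρ)]
  calc u ρ + exp (u ρ) * d ^ 4 / (64 * B ^ 2)
      = u ρ + exp (u ρ) * d ^ 2 / (8 * B) * (d / 2) ^ 2 / (2 * B) := by field_simp; ring
    _ ≤ u (ρ + d / 2) + v (ρ + d / 2) * (d / 2) ^ 2 / (2 * B) := by gcongr
    _ ≤ u (ρ + d) := by rwa [add_assoc, add_halves] at hu_half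

theorem v_nonpos (h : IsEntireRadialSolution N α u v) (hN : 1 ≤ N)
    (hNα : 0 ≤ (N : ℝ) - 1 + α) {r : ℝ} (hr : 0 ≤ r) : v r ≤ 0 := by
  by_contra! hv
  obtain ⟨ρ₀, hρ₀, hvρ₀, hu, hstart⟩ := h.exists_large_start_of_v_pos hN hr hv
  refine not_bddAbove_of_exp_increment (by positivity)
    (fun ρ d hρ hd hρd => h.exp_increment_le hN hNα hρ₀ hvρ₀ hu hρ hd hρd) hstart ?_
  exact isCompact_Icc.bddAbove_image
    (h.contDiffOn_u.continuousOn.mono fun x hx => (zero_le_one.trans hρ₀).trans hx.1)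

theorem antitoneOn_u (h : IsEntireRadialSolution N α u v) (hN : 1 ≤ N)
    (hNα : 0 ≤ (N : ℝ) - 1 + α) : AntitoneOn u (Ici 0) := by
  have hflux : AntitoneOn (radialFlux N u) (Ici 0) :=
    antitoneOn_Ici_of_hasDerivAt_nonpos h.continuousOn_radialFlux_u
      (fun x hx => h.hasDerivAt_radialFlux_u hN hx)
      (fun x hx => mul_nonpos_of_nonneg_of_nonpos (by positivity) (h.v_nonpos hN hNα hx.le))
  refine antitoneOn_Ici_of_hasDerivAt_nonpos h.contDiffOn_u.continuousOn
    (fun x hx => h.hasDerivAt_u hx) (fun x hx => ?_)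
  have := hflux self_mem_Ici hx.le hx.le
  rw [h.radialFlux_u_zero, radialFlux_of_pos hx] at this
  exact nonpos_of_mul_nonpos_right this (pow_pos hx _)

theorem exp_mul_rpow_div_le_radialFlux_v (h : IsEntireRadialSolution N α u v) (hN : 1 ≤ N)
    (hNα : 0 ≤ (N : ℝ) - 1 + α) {r : ℝ} (hr : 0 < r) :
    exp (u r) * r ^ ((N : ℝ) + α) / ((N : ℝ) + α) ≤ radialFlux N v r := by
  have hq : 0 < (N : ℝ) + α := by linarith
  have hcmp := sub_le_sub_of_hasDerivAt_le
    (f := fun s => exp (u r) * s ^ ((N : ℝ) + α) / ((N : ℝ) + α))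
    (f' := fun s => s ^ (N - 1) * (s ^ α * exp (u r))) hr.le
    ((continuous_const.mul (continuous_rpow_const hq.le)).div_const _).continuousOn
    (h.continuousOn_radialFlux_v.mono Icc_subset_Ici_self)
    (fun s hs => ((hasDerivAt_rpow_const (Or.inl hs.1.ne')).const_mul (exp (u r)) |>.div_const _)
      |>.congr_deriv (by
        rw [show s ^ ((N : ℝ) + α - 1) = s ^ (N - 1) * s ^ α by
          rw [← rpow_natCast, ← rpow_add hs.1, Nat.cast_sub hN]; ring_nf]
        field_simp))
    (fun s hs => h.hasDerivAt_radialFlux_v hN hs.1)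
    (fun s hs => by
      have := hs.1
      gcongr
      exact h.antitoneOn_u hN hNα hs.1.le hr.le hs.2.le)
  simpa [zero_rpow hq.ne', h.radialFlux_v_zero] using hcmp

theorem exp_mul_rpow_div_le_deriv_v (h : IsEntireRadialSolution N α u v) (hN : 1 ≤ N)
    (hNα : 0 ≤ (N : ℝ) - 1 + α) {s : ℝ} (hs : 0 < s) :
    exp (u s) * s ^ (1 + α) / ((N : ℝ) + α) ≤ deriv v s := by
  have hflux := h.exp_mul_rpow_div_le_radialFlux_v hN hNα hs
  rw [radialFlux_of_pos hs, show s ^ ((N : ℝ) + α) = s ^ (N - 1) * s ^ (1 + α) by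
    rw [← rpow_natCast, ← rpow_add hs, Nat.cast_sub hN]; ring_nf] at hflux
  refine le_of_mul_le_mul_left ?_ (pow_pos hs (N - 1))
  calc s ^ (N - 1) * (exp (u s) * s ^ (1 + α) / ((N : ℝ) + α))
      = exp (u s) * (s ^ (N - 1) * s ^ (1 + α)) / ((N : ℝ) + α) := by ring
    _ ≤ s ^ (N - 1) * deriv v s := hflux

theorem v_zero_add_le (h : IsEntireRadialSolution N α u v) (hN : 1 ≤ N)
    (hNα : 0 ≤ (N : ℝ) - 1 + α) (hα : 0 < 2 + α) {r : ℝ} (hr : 0 < r) :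
    v 0 + exp (u r) * r ^ (2 + α) / (((N : ℝ) + α) * (2 + α)) ≤ v r := by
  have hcmp := sub_le_sub_of_hasDerivAt_le
    (f := fun s => exp (u r) * s ^ (2 + α) / (((N : ℝ) + α) * (2 + α)))
    (f' := fun s => exp (u r) * s ^ (1 + α) / ((N : ℝ) + α)) hr.le
    ((continuous_const.mul (continuous_rpow_const hα.le)).div_const _).continuousOn
    (h.contDiffOn_v.continuousOn.mono Icc_subset_Ici_self)
    (fun s hs => ((hasDerivAt_rpow_const (Or.inl hs.1.ne')).const_mul (exp (u r)) |>.div_const _)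
      |>.congr_deriv (by rw [show 2 + α - 1 = 1 + α by ring]; field_simp))
    (fun s hs => h.hasDerivAt_v hs.1)
    (fun s hs => by
      have := hs.1
      have hq : 0 < (N : ℝ) + α := by linarith
      refine le_trans ?_ (h.exp_mul_rpow_div_le_deriv_v hN hNα hs.1)
      gcongr
      exact h.antitoneOn_u hN hNα hs.1.le hr.le hs.2.le)
  simp only [zero_rpow hα.ne', mul_zero, zero_div, sub_zero] at hcmp
  linarith

end IsEntireRadialSolution

/-- Pointwise decay estimate for entire radial solutions, `N ≥ 3`, `α > -2`:
`e^{u(r)} ≤ -β (2+α)(N+α) r^{-(2+α)}` for all `r > 0`, where `β = v(0)`. -/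
theorem pointwise_decay_entire_radial
    (N : ℕ) (hN : 3 ≤ N) (α : ℝ) (hα : -2 < α)
    (u v : ℝ → ℝ) (h : IsEntireRadialSolution N α u v) :
    ∀ r : ℝ, 0 < r →
      Real.exp (u r) ≤ -(v 0) * (2 + α) * ((N : ℝ) + α) * r ^ (-(2 + α)) := by
  intro r hr
  have hN1 : 1 ≤ N := by omega
  have hNα : 0 ≤ (N : ℝ) - 1 + α := by
    have : (3 : ℝ) ≤ N := by exact_mod_cast hN
    linarith
  have h2α : 0 < 2 + α := by linarith
  have hbound : exp (u r) * r ^ (2 + α) ≤ -v 0 * (((N : ℝ) + α) * (2 + α)) := by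
    rw [← div_le_iff₀ (mul_pos (by linarith) h2α)]
    linarith [h.v_zero_add_le hN1 hNα h2α hr, h.v_nonpos hN1 hNα hr.le]
  rw [rpow_neg hr.le, ← div_eq_mul_inv, le_div_iff₀ (rpow_pos_of_pos hr _)]
  linarith
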